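/- Let p > 2, c_Q = (2p+2)^(1/(p−1)), c₁ = ∫_ℝ (Q'(x))² dx and κ = (c_Q/c₁)·∫_ℝ Q(x)^p·e^(−x) dx. There exist constants C > 0 and z₀ > 0 such that for all z ≥ z₀, |∫_ℝ Q(y)^p·Q(y+z) dy − c₁·κ·e^(−z)| ≤ C·e^(−(3/2)z). -/

import Mathlib

open MeasureTheory

/-- The ground state of the one-dimensional nonlinear Klein-Gordon equation. -/
noncomputable def Q (p : ℝ) (x : ℝ) : ℝ :=
  ((p + 1) / (2 * Real.cosh ((p - 1) / 2 * x) ^ 2)) ^ (1 / (p - 1))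

/-- The constant `c_Q = (2p+2)^(1/(p-1))`. -/
noncomputable def cQ (p : ℝ) : ℝ := (2 * p + 2) ^ (1 / (p - 1))

/-- The constant `c₁ = ∫ (Q')²`. -/
noncomputable def c₁ (p : ℝ) : ℝ := ∫ x : ℝ, deriv (Q p) x ^ 2

/-- The interaction constant `κ = (c_Q/c₁) ∫ Q^p e^{-x}`. -/
noncomputable def κ (p : ℝ) : ℝ := cQ p / c₁ p * ∫ x : ℝ, Q p x ^ p * Real.exp (-x)

/-!
With `t = e^{-(p-1)x}` the ground state reads `Q x = c_Q e^{-x} (1 + t)^{-2/(p-1)}`, hence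
`0 ≤ c_Q e^{-x} - Q x ≤ c_Q e^{-x} min (1, 2t/(p-1)) ≤ c_Q √(2/(p-1)) e^{-(p+1)x/2}` for every real `x`,
and `Q x ≤ c_Q e^{-|x|}` by evenness. As `c₁ > 0`, `c₁ κ e^{-z} = ∫ Q(y)^p c_Q e^{-(y+z)} dy`, so the
difference to estimate is `∫ Q(y)^p (Q(y+z) - c_Q e^{-(y+z)}) dy`. Bounding the two factors by
`c_Q^p e^{-p|y|}` and `e^{-(p+1)(y+z)/2}` gives `O(e^{-(p+1)z/2})`, the integral in `y` converging
because `(p+1)/2 < p`; finally `(p+1)/2 ≥ 3/2`.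
-/

open Real Set Filter

lemma integrable_exp_neg_mul_abs_add_mul {a b : ℝ} (hab : |b| < a) :
    Integrable fun y : ℝ => exp (-(a * |y|) + b * y) := by
  obtain ⟨hneg, hpos⟩ := abs_lt.mp hab
  rw [← integrableOn_univ, ← Iic_union_Ioi (a := (0 : ℝ))]
  refine IntegrableOn.union ?_ ?_
  · refine (integrableOn_exp_mul_Iic (by linarith : 0 < a + b) 0).congr_fun
      (fun y hy => ?_) measurableSet_Iic
    rw [abs_of_nonpos hy]
    ring_nf
  · refine (integrableOn_exp_mul_Ioi (by linarith : b - a < 0) 0).congr_fun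
      (fun y hy => ?_) measurableSet_Ioi
    rw [abs_of_pos hy]
    ring_nf

lemma integrable_of_abs_le_mul_exp {f : ℝ → ℝ} (hf : AEStronglyMeasurable f) {C a b : ℝ}
    (hab : |b| < a) (hle : ∀ y, |f y| ≤ C * exp (-(a * |y|) + b * y)) : Integrable f :=
  ((integrable_exp_neg_mul_abs_add_mul hab).const_mul C).mono' hf (Eventually.of_forall hle)

lemma one_sub_one_add_rpow_neg_le_sqrt {a t : ℝ} (ha : 0 ≤ a) (ht : 0 ≤ t) :
    1 - (1 + t) ^ (-a) ≤ √(a * t) := by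
  set u := a * log (1 + t)
  have hu : 0 ≤ u := mul_nonneg ha (log_nonneg (by linarith))
  have hut : u ≤ a * t :=
    mul_le_mul_of_nonneg_left (by linarith [log_le_sub_one_of_pos (by linarith : 0 < 1 + t)]) ha
  have hexp : (1 + t) ^ (-a) = exp (-u) := by
    rw [rpow_def_of_pos (by linarith), mul_neg, mul_comm]
  rw [hexp]
  rcases le_total (a * t) 1 with hsmall | hlarge
  · calc 1 - exp (-u) ≤ u := by linarith [one_sub_le_exp_neg u]
      _ ≤ a * t := hut
      _ ≤ √(a * t) := le_sqrt_self_iff.2 hsmall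
  · calc 1 - exp (-u) ≤ 1 := by linarith [exp_pos (-u)]
      _ ≤ √(a * t) := one_le_sqrt.2 hlarge

section GroundState

variable {p : ℝ}

lemma Q_neg (p x : ℝ) : Q p (-x) = Q p x := by
  simp only [Q, mul_neg, cosh_neg]

lemma cQ_pos (hp : -1 < p) : 0 < cQ p :=
  rpow_pos_of_pos (by linarith) _

lemma Q_pos (hp : -1 < p) (x : ℝ) : 0 < Q p x :=
  rpow_pos_of_pos (div_pos (by linarith) (by positivity)) _

lemma Q_eq_mul_rpow (hp : 1 < p) (x : ℝ) :
    Q p x = cQ p * exp (-x) * (1 + exp (-(p - 1) * x)) ^ (-(2 / (p - 1))) := by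
  have hp1 : p - 1 ≠ 0 := by linarith
  have hsq : exp (-(p - 1) * x) = exp (-((p - 1) / 2 * x)) * exp (-((p - 1) / 2 * x)) := by
    rw [← exp_add]
    ring_nf
  have hbase : (p + 1) / (2 * cosh ((p - 1) / 2 * x) ^ 2)
      = (2 * p + 2) * exp (-(p - 1) * x) * ((1 + exp (-(p - 1) * x)) ^ 2)⁻¹ := by
    rw [cosh_eq, hsq, exp_neg]
    field_simp
  have hnn : (0 : ℝ) ≤ 1 + exp (-(p - 1) * x) := by positivity
  rw [Q, hbase, ← rpow_two, ← rpow_neg hnn, mul_rpow (by positivity) (by positivity),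
    mul_rpow (by linarith) (by positivity), ← rpow_mul hnn, cQ, ← exp_mul]
  congr 3 <;> field_simp

lemma Q_le_cQ_mul_exp_neg (hp : 1 < p) (x : ℝ) : Q p x ≤ cQ p * exp (-x) := by
  rw [Q_eq_mul_rpow hp]
  refine mul_le_of_le_one_right (by have := cQ_pos (by linarith : -1 < p); positivity)
    (rpow_le_one_of_one_le_of_nonpos ?_ ?_)
  · linarith [exp_pos (-(p - 1) * x)]
  · exact neg_nonpos.2 (div_nonneg zero_le_two (by linarith))

lemma Q_le_cQ_mul_exp_neg_abs (hp : 1 < p) (x : ℝ) : Q p x ≤ cQ p * exp (-|x|) := by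
  rcases abs_choice x with hx | hx
  · rw [hx]
    exact Q_le_cQ_mul_exp_neg hp x
  · rw [hx, ← Q_neg]
    simpa using Q_le_cQ_mul_exp_neg hp (-x)

lemma Q_rpow_le (hp : 1 < p) (x : ℝ) : Q p x ^ p ≤ cQ p ^ p * exp (-(p * |x|)) := by
  calc Q p x ^ p ≤ (cQ p * exp (-|x|)) ^ p :=
        rpow_le_rpow (Q_pos (by linarith) x).le (Q_le_cQ_mul_exp_neg_abs hp x) (by linarith)
    _ = cQ p ^ p * exp (-(p * |x|)) := by
        rw [mul_rpow (cQ_pos (by linarith)).le (exp_pos _).le, ← exp_mul]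
        ring_nf

lemma abs_Q_sub_le (hp : 1 < p) (x : ℝ) :
    |Q p x - cQ p * exp (-x)| ≤ cQ p * √(2 / (p - 1)) * exp (-((p + 1) / 2 * x)) := by
  have ha : 0 ≤ 2 / (p - 1) := div_nonneg zero_le_two (by linarith)
  have hA : 0 ≤ cQ p * exp (-x) := by have := cQ_pos (by linarith : -1 < p); positivity
  rw [abs_sub_comm, abs_of_nonneg (sub_nonneg.2 (Q_le_cQ_mul_exp_neg hp x)),
    Q_eq_mul_rpow hp, ← mul_one_sub]
  calc cQ p * exp (-x) * (1 - (1 + exp (-(p - 1) * x)) ^ (-(2 / (p - 1))))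
      ≤ cQ p * exp (-x) * √(2 / (p - 1) * exp (-(p - 1) * x)) :=
        mul_le_mul_of_nonneg_left (one_sub_one_add_rpow_neg_le_sqrt ha (exp_pos _).le) hA
    _ = cQ p * √(2 / (p - 1)) * (exp (-x) * exp (-(p - 1) * x / 2)) := by
        rw [sqrt_mul ha, ← exp_half]
        ring
    _ = cQ p * √(2 / (p - 1)) * exp (-((p + 1) / 2 * x)) := by
        rw [← exp_add]
        ring_nf

lemma hasDerivAt_Q (hp : 1 < p) (x : ℝ) :
    HasDerivAt (Q p) (-(Q p x * tanh ((p - 1) / 2 * x))) x := by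
  have hcosh : HasDerivAt (fun y => 2 * cosh ((p - 1) / 2 * y) ^ 2)
      (2 * (2 * cosh ((p - 1) / 2 * x) * (sinh ((p - 1) / 2 * x) * ((p - 1) / 2)))) x := by
    simpa using ((((hasDerivAt_id x).const_mul ((p - 1) / 2)).cosh).pow 2).const_mul (2 : ℝ)
  have hbase := (hasDerivAt_const x (p + 1)).div hcosh (by positivity)
  have hB : 0 < (p + 1) / (2 * cosh ((p - 1) / 2 * x) ^ 2) := div_pos (by linarith) (by positivity)
  convert hbase.rpow_const (p := 1 / (p - 1)) (Or.inl hB.ne') using 1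
  · rfl
  have hp1 : p - 1 ≠ 0 := by linarith
  rw [Pi.div_apply, rpow_sub hB, rpow_one, tanh_eq_sinh_div_cosh, Q]
  field_simp
  ring

lemma continuous_Q (hp : 1 < p) : Continuous (Q p) :=
  continuous_iff_continuousAt.2 fun x => (hasDerivAt_Q hp x).continuousAt

lemma integrable_deriv_Q_sq (hp : 1 < p) : Integrable fun x => deriv (Q p) x ^ 2 := by
  refine integrable_of_abs_le_mul_exp (C := cQ p ^ 2) (a := 2) (b := 0)
    ((measurable_deriv _).pow_const 2).aestronglyMeasurable (by norm_num) fun x => ?_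
  have hQ := Q_pos (by linarith : -1 < p) x
  rw [(hasDerivAt_Q hp x).deriv, abs_of_nonneg (sq_nonneg _)]
  calc (-(Q p x * tanh ((p - 1) / 2 * x))) ^ 2 = Q p x ^ 2 * tanh ((p - 1) / 2 * x) ^ 2 := by ring
    _ ≤ Q p x ^ 2 * 1 := by gcongr; exact (tanh_sq_lt_one _).le
    _ ≤ (cQ p * exp (-|x|)) ^ 2 := by rw [mul_one]; gcongr; exact Q_le_cQ_mul_exp_neg_abs hp x
    _ = cQ p ^ 2 * exp (-(2 * |x|) + 0 * x) := by rw [mul_pow, ← exp_nat_mul]; ring_nf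

lemma c₁_pos (hp : 1 < p) : 0 < c₁ p := by
  rw [c₁, integral_pos_iff_support_of_nonneg (fun x => sq_nonneg _) (integrable_deriv_Q_sq hp)]
  refine lt_of_lt_of_le (by simp) (measure_mono (s := Ioi 0) fun x (hx : 0 < x) => ?_)
  have htanh : 0 < tanh ((p - 1) / 2 * x) := by
    rw [tanh_eq_sinh_div_cosh]
    exact div_pos (sinh_pos_iff.2 (mul_pos (by linarith) hx)) (cosh_pos _)
  have hQ := Q_pos (by linarith : -1 < p) x
  simp [Function.mem_support, (hasDerivAt_Q hp x).deriv, hQ.ne', htanh.ne']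

lemma integrable_Q_rpow_mul (hp : 1 < p) {g : ℝ → ℝ} (hg : Continuous g) {C b : ℝ} (hb : |b| < p)
    (hle : ∀ y, |g y| ≤ C * exp (b * y)) : Integrable fun y => Q p y ^ p * g y := by
  refine integrable_of_abs_le_mul_exp (C := cQ p ^ p * C) (hab := hb)
    (((continuous_Q hp).rpow_const fun _ => Or.inr (by linarith)).mul hg).aestronglyMeasurable
    fun y => ?_
  have hQp : 0 ≤ Q p y ^ p := (rpow_pos_of_pos (Q_pos (by linarith) y) _).le
  have hcQp : 0 < cQ p ^ p := rpow_pos_of_pos (cQ_pos (by linarith)) _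
  rw [abs_mul, abs_of_nonneg hQp, exp_add]
  calc Q p y ^ p * |g y| ≤ cQ p ^ p * exp (-(p * |y|)) * (C * exp (b * y)) :=
        mul_le_mul (Q_rpow_le hp y) (hle y) (abs_nonneg _) (by positivity)
    _ = cQ p ^ p * C * (exp (-(p * |y|)) * exp (b * y)) := by ring

lemma integrable_Q_rpow_mul_exp_neg (hp : 1 < p) : Integrable fun y => Q p y ^ p * exp (-y) :=
  integrable_Q_rpow_mul hp (C := 1) (b := -1) (by fun_prop) (by rwa [abs_neg, abs_one])
    fun y => by simp

lemma integrable_Q_rpow_mul_Q_add (hp : 1 < p) (z : ℝ) :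
    Integrable fun y => Q p y ^ p * Q p (y + z) := by
  refine integrable_Q_rpow_mul hp (C := cQ p) (b := 0)
    ((continuous_Q hp).comp (continuous_add_const z)) (by rw [abs_zero]; linarith) fun y => ?_
  rw [abs_of_pos (Q_pos (by linarith) _), zero_mul, exp_zero, mul_one]
  exact (Q_le_cQ_mul_exp_neg_abs hp _).trans (mul_le_of_le_one_right (cQ_pos (by linarith)).le
    (exp_le_one_iff.2 (neg_nonpos.2 (abs_nonneg _))))

lemma integral_Q_rpow_mul_Q_add_sub (hp : 1 < p) (z : ℝ) :
    (∫ y, Q p y ^ p * Q p (y + z)) - cQ p * (∫ y, Q p y ^ p * exp (-y)) * exp (-z)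
      = ∫ y, Q p y ^ p * (Q p (y + z) - cQ p * exp (-(y + z))) := by
  have hleading : (fun y => Q p y ^ p * (cQ p * exp (-(y + z))))
      = fun y => cQ p * exp (-z) * (Q p y ^ p * exp (-y)) := by
    funext y
    rw [neg_add, exp_add]
    ring
  simp_rw [mul_sub]
  rw [integral_sub (integrable_Q_rpow_mul_Q_add hp z)
    (hleading ▸ (integrable_Q_rpow_mul_exp_neg hp).const_mul _), hleading, integral_const_mul]
  ring

lemma exists_abs_integral_Q_rpow_mul_sub_le (hp : 1 < p) :
    ∃ C > 0, ∀ z : ℝ, |(∫ y, Q p y ^ p * Q p (y + z))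
      - cQ p * (∫ y, Q p y ^ p * exp (-y)) * exp (-z)| ≤ C * exp (-((p + 1) / 2 * z)) := by
  set K := cQ p * √(2 / (p - 1))
  set F : ℝ → ℝ := fun y => exp (-(p * |y|) + -((p + 1) / 2) * y)
  have hF : Integrable F :=
    integrable_exp_neg_mul_abs_add_mul (by rw [abs_neg, abs_of_pos (by linarith)]; linarith)
  have hcQ := cQ_pos (by linarith : -1 < p)
  have hcQp : 0 < cQ p ^ p := rpow_pos_of_pos hcQ _
  have hK : 0 < K := mul_pos hcQ (sqrt_pos.2 (div_pos two_pos (by linarith)))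
  refine ⟨cQ p ^ p * K * ∫ y, F y, by have := integral_exp_pos hF; positivity, fun z => ?_⟩
  have hpointwise (y : ℝ) : ‖Q p y ^ p * (Q p (y + z) - cQ p * exp (-(y + z)))‖
      ≤ cQ p ^ p * K * exp (-((p + 1) / 2 * z)) * F y := by
    rw [norm_mul, norm_of_nonneg (rpow_pos_of_pos (Q_pos (by linarith) y) _).le, norm_eq_abs]
    calc Q p y ^ p * |Q p (y + z) - cQ p * exp (-(y + z))|
        ≤ cQ p ^ p * exp (-(p * |y|)) * (K * exp (-((p + 1) / 2 * (y + z)))) :=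
          mul_le_mul (Q_rpow_le hp y) (abs_Q_sub_le hp (y + z)) (abs_nonneg _) (by positivity)
      _ = cQ p ^ p * K * exp (-((p + 1) / 2 * z)) * F y := by
          simp only [F]
          rw [show -((p + 1) / 2 * (y + z)) = -((p + 1) / 2) * y + -((p + 1) / 2 * z) by ring,
            exp_add, exp_add]
          ring
  rw [integral_Q_rpow_mul_Q_add_sub hp, ← norm_eq_abs]
  calc _ ≤ ∫ y, cQ p ^ p * K * exp (-((p + 1) / 2 * z)) * F y :=
        norm_integral_le_of_norm_le (hF.const_mul _) (Eventually.of_forall hpointwise)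
    _ = (cQ p ^ p * K * ∫ y, F y) * exp (-((p + 1) / 2 * z)) := by
        rw [integral_const_mul]
        ring

end GroundState

theorem ground_state_interaction_asymptotics (p : ℝ) (hp : 2 < p) :
    ∃ C > 0, ∃ z₀ > 0, ∀ z : ℝ, z₀ ≤ z →
      |(∫ y : ℝ, Q p y ^ p * Q p (y + z)) - c₁ p * κ p * Real.exp (-z)|
        ≤ C * Real.exp (-(3 / 2) * z) := by
  obtain ⟨C, hC, hbound⟩ := exists_abs_integral_Q_rpow_mul_sub_le (by linarith : 1 < p)
  have hκ : c₁ p * κ p = cQ p * ∫ y, Q p y ^ p * exp (-y) := by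
    rw [κ]
    field_simp [(c₁_pos (by linarith : 1 < p)).ne']
  refine ⟨C, hC, 1, one_pos, fun z hz => ?_⟩
  rw [hκ]
  exact (hbound z).trans (mul_le_mul_of_nonneg_left (exp_le_exp.2 (by nlinarith)) hC.le)
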